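/- arXiv:2605.14425 — 3 statements merged into one kernel-verified Lean document; each statement's English description precedes it below -/
import Mathlib

section
/- For any complex numbers ω₁₁, ω₁₃, ω₃₃ satisfying |ω₁₃|² + 3|ω₃₃|² ≤ 1/3, |2ω₁₃ - ω₁₁²| ≤ 1, and |ω₁₁| ≤ 1, one has |−ω₃₃ + 4ω₁₁ω₁₃ − 3ω₁₁³| ≤ 10/3. -/
/-! Rewrite the expression as `-ω₃₃ + 2ω₁₁(2ω₁₃ - ω₁₁²) - ω₁₁³` and apply the triangle
inequality: the three terms are bounded by `1/3` (the first hypothesis forces `|ω₃₃| ≤ 1/3`),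
`2` and `1`. -/

lemma le_one_third_of_sq_add_three_mul_sq_le {x y : ℝ} (hy : 0 ≤ y)
    (h : x ^ 2 + 3 * y ^ 2 ≤ 1 / 3) : y ≤ 1 / 3 := by
  nlinarith [sq_nonneg x]

lemma norm_neg_add_two_mul_mul_sub_pow_three_le {𝕜 : Type*} [RCLike 𝕜] (a c d : 𝕜) :
    ‖-c + 2 * a * d - a ^ 3‖ ≤ ‖c‖ + 2 * ‖a‖ * ‖d‖ + ‖a‖ ^ 3 := by
  calc ‖-c + 2 * a * d - a ^ 3‖ ≤ ‖-c + 2 * a * d‖ + ‖a ^ 3‖ := norm_sub_le _ _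
    _ ≤ ‖-c‖ + ‖2 * a * d‖ + ‖a ^ 3‖ := by gcongr; exact norm_add_le _ _
    _ = ‖c‖ + 2 * ‖a‖ * ‖d‖ + ‖a‖ ^ 3 := by
      simp only [norm_neg, norm_mul, norm_pow, RCLike.norm_ofNat]

/-- Key algebraic estimate for `|Γ₃| ≤ 10/3`. -/
theorem key_estimate_Gamma3 (ω11 ω13 ω33 : ℂ)
    (h1 : ‖ω13‖ ^ 2 + 3 * ‖ω33‖ ^ 2 ≤ 1 / 3)
    (h2 : ‖2 * ω13 - ω11 ^ 2‖ ≤ 1)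
    (h3 : ‖ω11‖ ≤ 1) :
    ‖-ω33 + 4 * ω11 * ω13 - 3 * ω11 ^ 3‖ ≤ 10 / 3 := by
  have h33 : ‖ω33‖ ≤ 1 / 3 := le_one_third_of_sq_add_three_mul_sq_le (norm_nonneg _) h1
  calc ‖-ω33 + 4 * ω11 * ω13 - 3 * ω11 ^ 3‖
      = ‖-ω33 + 2 * ω11 * (2 * ω13 - ω11 ^ 2) - ω11 ^ 3‖ := by ring_nf
    _ ≤ ‖ω33‖ + 2 * ‖ω11‖ * ‖2 * ω13 - ω11 ^ 2‖ + ‖ω11‖ ^ 3 :=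
      norm_neg_add_two_mul_mul_sub_pow_three_le _ _ _
    _ ≤ 1 / 3 + 2 * 1 * 1 + 1 ^ 3 := by gcongr
    _ = 10 / 3 := by norm_num
end

section
/- For complex numbers ω₁₁, ω₁₃, ω₃₃ with |ω₁₁| ≤ 1, |ω₁₃|² + 3|ω₃₃|² ≤ 1/3 and |2ω₁₃ − ω₁₁²| ≤ 1, one has |ω₃₃ − 3ω₁₁ω₁₃ + (3/2)ω₁₁³| ≤ 11/6. -/
theorem abs_le_one_third_of_sq_add_three_mul_sq_le {x y : ℝ} (h : x ^ 2 + 3 * y ^ 2 ≤ 1 / 3) :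
    |y| ≤ 1 / 3 :=
  abs_le_of_sq_le_sq (by nlinarith [sq_nonneg x]) (by norm_num)

theorem norm_sub_three_mul_mul_add_le {𝕜 : Type*} [RCLike 𝕜] (a b c : 𝕜) :
    ‖a - 3 * b * c + 3 / 2 * b ^ 3‖ ≤ ‖a‖ + 3 / 2 * ‖b‖ * ‖2 * c - b ^ 2‖ := by
  have hdecomp : a - 3 * b * c + 3 / 2 * b ^ 3 = a - 3 / 2 * b * (2 * c - b ^ 2) := by ring
  have hnorm : ‖(3 / 2 : 𝕜)‖ = 3 / 2 := by rw [norm_div, RCLike.norm_ofNat, RCLike.norm_ofNat]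
  calc ‖a - 3 * b * c + 3 / 2 * b ^ 3‖ ≤ ‖a‖ + ‖3 / 2 * b * (2 * c - b ^ 2)‖ := by
        rw [hdecomp]; exact norm_sub_le _ _
    _ = ‖a‖ + 3 / 2 * ‖b‖ * ‖2 * c - b ^ 2‖ := by rw [norm_mul, norm_mul, hnorm]

/-- Key estimate in the proof that `|Γ₃| - |Γ₂| ≤ 11/6`. -/
theorem key_estimate_diff (ω11 ω13 ω33 : ℂ)
    (h3 : ‖ω11‖ ≤ 1)
    (h1 : ‖ω13‖ ^ 2 + 3 * ‖ω33‖ ^ 2 ≤ 1 / 3)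
    (h2 : ‖2 * ω13 - ω11 ^ 2‖ ≤ 1) :
    ‖ω33 - 3 * ω11 * ω13 + (3 / 2) * ω11 ^ 3‖ ≤ 11 / 6 := by
  have h33 : ‖ω33‖ ≤ 1 / 3 := by
    simpa only [abs_norm] using abs_le_one_third_of_sq_add_three_mul_sq_le h1
  calc ‖ω33 - 3 * ω11 * ω13 + (3 / 2) * ω11 ^ 3‖
      ≤ ‖ω33‖ + 3 / 2 * ‖ω11‖ * ‖2 * ω13 - ω11 ^ 2‖ := norm_sub_three_mul_mul_add_le _ _ _
    _ ≤ 1 / 3 + 3 / 2 * 1 * 1 := by gcongr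
    _ = 11 / 6 := by norm_num
end

section
/- For complex numbers a₂, a₃ with |a₂| ≤ 1 and |a₃ − a₂²| ≤ (1/3)(1 − |a₂|²), one has |−a₃ + (3/2)a₂²| ≥ |a₂| − √(2/5); equivalently (1/2)|−a₃ + (3/2)a₂²| − (1/2)|a₂| ≥ −√10/10. -/
/-!
Writing `-a₃ + (3/2)a₂² = (1/2)a₂² - (a₃ - a₂²)`, the hypothesis gives
`‖-a₃ + (3/2)a₂²‖ ≥ (5/6)‖a₂‖² - 1/3`. With `s = √(2/5)`, the quadratic bound dominates
`‖a₂‖ - s` as soon as `‖a₂‖ ≥ s`, because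
`(5/6)x² - 1/3 - (x - s) = (x - s)((5/6)(x + s) - 1)` and `(5/3)s ≥ 1`;
below `s` the claim is trivial.
-/

open Real

lemma half_norm_sq_sub_norm_le {𝕜 : Type*} [RCLike 𝕜] (a₂ a₃ : 𝕜) :
    1 / 2 * ‖a₂‖ ^ 2 - ‖a₃ - a₂ ^ 2‖ ≤ ‖-a₃ + 3 / 2 * a₂ ^ 2‖ := by
  have hsplit : -a₃ + 3 / 2 * a₂ ^ 2 = 1 / 2 * a₂ ^ 2 - (a₃ - a₂ ^ 2) := by ring
  have hhalf : ‖(1 / 2 : 𝕜) * a₂ ^ 2‖ = 1 / 2 * ‖a₂‖ ^ 2 := by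
    rw [norm_mul, norm_pow, one_div, norm_inv, RCLike.norm_ofNat, one_div]
  rw [hsplit, ← hhalf]
  exact norm_sub_norm_le _ _

lemma sub_sqrt_two_fifths_le {x y : ℝ} (hy₀ : 0 ≤ y) (hy : 5 / 6 * x ^ 2 - 1 / 3 ≤ y) :
    x - √(2 / 5) ≤ y := by
  set s := √(2 / 5)
  have hs₀ : 0 ≤ s := sqrt_nonneg _
  have hs_sq : s ^ 2 = 2 / 5 := sq_sqrt (by norm_num)
  rcases le_or_gt x s with hxs | hsx
  · linarith
  · have hs : 3 / 5 ≤ s := by nlinarith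
    have hfactor : 0 ≤ (x - s) * (5 / 6 * (x + s) - 1) :=
      mul_nonneg (by linarith) (by linarith)
    nlinarith

lemma sqrt_ten_div_ten : √10 / 10 = √(2 / 5) / 2 := by
  rw [show (10 : ℝ) = 5 ^ 2 * (2 / 5) by norm_num, sqrt_mul (by positivity), sqrt_sq (by norm_num)]
  ring

theorem lower_bound_diff_convex_general (a2 a3 : ℂ)
    (h3 : ‖a3 - a2 ^ 2‖ ≤ (1 / 3) * (1 - ‖a2‖ ^ 2)) :
    ‖-a3 + (3 / 2) * a2 ^ 2‖ ≥ ‖a2‖ - Real.sqrt (2 / 5) ∧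
      (1 / 2) * ‖-a3 + (3 / 2) * a2 ^ 2‖ - (1 / 2) * ‖a2‖ ≥
        -(Real.sqrt 10) / 10 := by
  have hquad : 5 / 6 * ‖a2‖ ^ 2 - 1 / 3 ≤ ‖-a3 + 3 / 2 * a2 ^ 2‖ := by
    linarith [half_norm_sq_sub_norm_le a2 a3]
  have hmain := sub_sqrt_two_fifths_le (norm_nonneg _) hquad
  refine ⟨hmain, ?_⟩
  rw [neg_div, sqrt_ten_div_ten]
  linarith

/-- Lower bound computation for `|Γ₂| - |Γ₁| ≥ -√10/10` in the convex case. -/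
theorem lower_bound_diff_convex (a2 a3 : ℂ)
    (h2 : ‖a2‖ ≤ 1)
    (h3 : ‖a3 - a2 ^ 2‖ ≤ (1 / 3) * (1 - ‖a2‖ ^ 2)) :
    ‖-a3 + (3 / 2) * a2 ^ 2‖ ≥ ‖a2‖ - Real.sqrt (2 / 5) ∧
      (1 / 2) * ‖-a3 + (3 / 2) * a2 ^ 2‖ - (1 / 2) * ‖a2‖ ≥
        -(Real.sqrt 10) / 10 :=
  lower_bound_diff_convex_general a2 a3 h3
end
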